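/- arXiv:2003.14344 — 5 statements merged into one kernel-verified Lean document; each statement's English description precedes it below -/
import Mathlib

section
/- Fix real numbers μ and λ with λ < 0, and a constant C > 0. Suppose f : (-∞, 0] → (0, ∞) is continuously differentiable and satisfies |f'(τ) + μ f(τ)| ≤ C e^{-λτ} f(τ) for all τ ≤ 0. Then the limit lim_{τ → -∞} e^{μτ} f(τ) exists, is finite, and is strictly positive. In particular 0 < liminf_{τ→-∞} e^{μτ} f(τ) ≤ limsup_{τ→-∞} e^{μτ} f(τ) < ∞. -/
/-- Gronwall-type argument: if `f > 0` is `C¹` on `(-∞,0]` with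
`|f' + μ f| ≤ C e^{-λ τ} f` and `λ < 0`, then `e^{μτ} f(τ)` converges as `τ → -∞`
to a finite strictly positive limit. -/
theorem stmt2 (μ lam C : ℝ) (hlam : lam < 0) (hC : 0 < C)
    (f f' : ℝ → ℝ)
    (hf : ∀ τ ≤ (0:ℝ), 0 < f τ)
    (hd : ∀ τ ≤ (0:ℝ), HasDerivAt f (f' τ) τ)
    (hf'cont : ContinuousOn f' (Set.Iic 0))
    (hineq : ∀ τ ≤ (0:ℝ), |f' τ + μ * f τ| ≤ C * Real.exp (-lam * τ) * f τ) :
    ∃ L : ℝ, 0 < L ∧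
      Filter.Tendsto (fun τ => Real.exp (μ * τ) * f τ) Filter.atBot (nhds L) := by
  set h : ℝ → ℝ := fun τ => μ * τ + Real.log (f τ) with hh
  set ψ : ℝ → ℝ := fun τ => (C / (-lam)) * Real.exp (-lam * τ) with hψ
  have hlam' : (0:ℝ) < -lam := by linarith
  have hψpos : ∀ τ, 0 < ψ τ := fun τ => by positivity
  -- derivative of h
  have hdh : ∀ τ ≤ (0:ℝ), HasDerivAt h (μ + f' τ / f τ) τ := by
    intro τ hτ
    have h1 : HasDerivAt (fun τ : ℝ => μ * τ) μ τ := by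
      simpa using (hasDerivAt_id τ).const_mul μ
    exact h1.add ((hd τ hτ).log (hf τ hτ).ne')
  -- derivative of ψ
  have hdψ : ∀ τ : ℝ, HasDerivAt ψ (C * Real.exp (-lam * τ)) τ := by
    intro τ
    have h1 : HasDerivAt (fun τ : ℝ => Real.exp (-lam * τ))
        (Real.exp (-lam * τ) * (-lam)) τ := by
      have : HasDerivAt (fun τ : ℝ => -lam * τ) (-lam) τ := by
        simpa using (hasDerivAt_id τ).const_mul (-lam)
      exact this.exp
    have h2 := h1.const_mul (C / (-lam))
    have heq : C / (-lam) * (Real.exp (-lam * τ) * (-lam)) = C * Real.exp (-lam * τ) := by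
      rw [div_mul_eq_mul_div, div_eq_iff (neg_ne_zero.2 hlam.ne)]
      ring
    rw [heq] at h2
    exact h2
  -- the bound on h'
  have hbound : ∀ τ ≤ (0:ℝ), |μ + f' τ / f τ| ≤ C * Real.exp (-lam * τ) := by
    intro τ hτ
    have hfτ := hf τ hτ
    have : μ + f' τ / f τ = (f' τ + μ * f τ) / f τ := by field_simp; ring
    rw [this, abs_div, abs_of_pos hfτ, div_le_iff₀ hfτ]
    exact hineq τ hτ
  have hcontf : ContinuousOn f (Set.Iic 0) := fun τ hτ =>
    ((hd τ hτ).continuousAt).continuousWithinAt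
  have hconth : ContinuousOn h (Set.Iic 0) := by
    apply ContinuousOn.add (by fun_prop)
    exact hcontf.log (fun τ hτ => (hf τ hτ).ne')
  have hcontψ : Continuous ψ := by fun_prop
  have hint : interior (Set.Iic (0:ℝ)) = Set.Iio 0 := interior_Iic
  -- h + ψ is monotone on Iic 0
  have hmono : MonotoneOn (fun τ => h τ + ψ τ) (Set.Iic 0) := by
    apply monotoneOn_of_deriv_nonneg (convex_Iic 0)
      (hconth.add hcontψ.continuousOn)
    · rw [hint]
      intro x hx
      exact ((hdh x (le_of_lt hx)).add (hdψ x)).differentiableAt.differentiableWithinAt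
    · rw [hint]
      intro x hx
      rw [((hdh x (le_of_lt hx)).add (hdψ x)).deriv]
      have := (abs_le.1 (hbound x (le_of_lt hx))).1
      linarith
  -- h - ψ is antitone on Iic 0
  have hanti : AntitoneOn (fun τ => h τ - ψ τ) (Set.Iic 0) := by
    apply antitoneOn_of_deriv_nonpos (convex_Iic 0)
      (hconth.sub hcontψ.continuousOn)
    · rw [hint]
      intro x hx
      exact ((hdh x (le_of_lt hx)).sub (hdψ x)).differentiableAt.differentiableWithinAt
    · rw [hint]
      intro x hx
      rw [((hdh x (le_of_lt hx)).sub (hdψ x)).deriv]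
      have := (abs_le.1 (hbound x (le_of_lt hx))).2
      linarith
  -- lower bound for h + ψ on Iic 0
  have hlb : ∀ τ ≤ (0:ℝ), h 0 - ψ 0 ≤ h τ + ψ τ := by
    intro τ hτ
    have := hanti hτ (le_refl (0:ℝ)) hτ
    have := hψpos τ
    simp only at *
    linarith
  -- extended function G
  set G : ℝ → ℝ := fun τ => h (min τ 0) + ψ (min τ 0) with hG
  have hGmono : Monotone G := fun a b hab =>
    hmono (Set.mem_Iic.2 (min_le_right a 0)) (Set.mem_Iic.2 (min_le_right b 0))
      (min_le_min hab le_rfl)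
  have hGbdd : BddBelow (Set.range G) := by
    refine ⟨h 0 - ψ 0, ?_⟩
    rintro x ⟨τ, rfl⟩
    exact hlb _ (min_le_right τ 0)
  have hGt : Filter.Tendsto G Filter.atBot (nhds (⨅ τ, G τ)) :=
    tendsto_atBot_ciInf hGmono hGbdd
  set M := ⨅ τ, G τ with hM
  -- ψ → 0 at atBot
  have hψ0 : Filter.Tendsto ψ Filter.atBot (nhds 0) := by
    have h1 : Filter.Tendsto (fun τ : ℝ => -lam * τ) Filter.atBot Filter.atBot :=
      Filter.Tendsto.const_mul_atBot hlam' Filter.tendsto_id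
    have h2 : Filter.Tendsto (fun τ : ℝ => Real.exp (-lam * τ)) Filter.atBot (nhds 0) :=
      Real.tendsto_exp_atBot.comp h1
    have := h2.const_mul (C / (-lam))
    simpa [hψ] using this
  -- h → M at atBot
  have hht : Filter.Tendsto h Filter.atBot (nhds M) := by
    have : Filter.Tendsto (fun τ => G τ - ψ τ) Filter.atBot (nhds (M - 0)) :=
      hGt.sub hψ0
    refine this.congr' ?_ |>.mono_right (by simp)
    filter_upwards [Filter.eventually_le_atBot (0:ℝ)] with τ hτ
    simp [hG, min_eq_left hτ]
  refine ⟨Real.exp M, Real.exp_pos M, ?_⟩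
  have := (Real.continuous_exp.tendsto M).comp hht
  refine this.congr' ?_
  filter_upwards [Filter.eventually_le_atBot (0:ℝ)] with τ hτ
  simp only [Function.comp, hh, Real.exp_add, Real.exp_log (hf τ hτ)]
end

section
/- Let λ < 0, τ₀ ≤ 0, and C₂, C₆ > 0. Suppose a, b : (-∞, τ₀] → [0, ∞) are continuous functions such that: (i) a(τ) ≤ e^{-2λτ} for all τ ≤ τ₀; (ii) b(τ) ≤ C₆ ∫_{-∞}^τ a(s) ds for all τ ≤ τ₀; (iii) e^{2λτ} a(τ) ≤ C₂ ∫_{-∞}^τ e^{λs} b(s) ds for all τ ≤ τ₀. Then a ≡ 0 and b ≡ 0 on (-∞, τ₀]. -/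
open MeasureTheory

lemma intexp_aux (μ : ℝ) (hμ : μ ≠ 0) (y c : ℝ) :
    ∫ x in y..c, Real.exp (μ * x) = (Real.exp (μ * c) - Real.exp (μ * y)) / μ := by
  have h := intervalIntegral.integral_comp_mul_left (a := y) (b := c) Real.exp hμ
  rw [h, integral_exp, smul_eq_mul]
  ring

lemma expmul_integrableOn (μ c : ℝ) (hμ : 0 < μ) :
    IntegrableOn (fun s => Real.exp (μ * s)) (Set.Iic c) := by
  refine integrableOn_Iic_of_intervalIntegral_norm_bounded (Real.exp (μ * c) / μ) c
    (fun y => ((Real.continuous_exp.comp (continuous_const.mul continuous_id)).intervalIntegrable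
      _ _).1) Filter.tendsto_id ?_
  filter_upwards with y
  simp_rw [Real.norm_eq_abs, abs_of_nonneg (Real.exp_pos _).le, intexp_aux μ hμ.ne', id_eq]
  have h : 0 ≤ Real.exp (μ * y) := (Real.exp_pos _).le
  gcongr
  linarith

lemma expmul_integral (μ c : ℝ) (hμ : 0 < μ) :
    ∫ s in Set.Iic c, Real.exp (μ * s) = Real.exp (μ * c) / μ := by
  refine tendsto_nhds_unique
    (intervalIntegral_tendsto_integral_Iic _ (expmul_integrableOn μ c hμ) Filter.tendsto_id) ?_
  have h1 : Filter.Tendsto (fun y : ℝ => Real.exp (μ * y)) Filter.atBot (nhds 0) :=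
    Real.tendsto_exp_atBot.comp (Filter.tendsto_id.const_mul_atBot hμ)
  have h2 : Filter.Tendsto (fun y : ℝ => (Real.exp (μ * c) - Real.exp (μ * y)) / μ)
      Filter.atBot (nhds ((Real.exp (μ * c) - 0) / μ)) :=
    (Filter.Tendsto.sub tendsto_const_nhds h1).div_const μ
  rw [sub_zero] at h2
  exact h2.congr fun y => (intexp_aux μ hμ.ne' y c).symm

/-- If `f` is continuous nonneg on `Iic τ₀` and bounded by `C e^{μ s}` with `μ > 0`,
then it is integrable on each `Iic τ` (`τ ≤ τ₀`) with integral at most `C e^{μ τ}/μ`. -/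
lemma bound_int {τ₀ C μ : ℝ} (hμ : 0 < μ) (hC : 0 ≤ C) {f : ℝ → ℝ}
    (hf : ContinuousOn f (Set.Iic τ₀)) (h0 : ∀ s ≤ τ₀, 0 ≤ f s)
    (hb : ∀ s ≤ τ₀, f s ≤ C * Real.exp (μ * s)) {τ : ℝ} (hτ : τ ≤ τ₀) :
    IntegrableOn f (Set.Iic τ) ∧ (∫ s in Set.Iic τ, f s) ≤ C * Real.exp (μ * τ) / μ := by
  have hsub : Set.Iic τ ⊆ Set.Iic τ₀ := Set.Iic_subset_Iic.mpr hτ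
  have hg : IntegrableOn (fun s => C * Real.exp (μ * s)) (Set.Iic τ) :=
    (expmul_integrableOn μ τ hμ).const_mul C
  have hmeas : AEStronglyMeasurable f (volume.restrict (Set.Iic τ)) :=
    (hf.mono hsub).aestronglyMeasurable measurableSet_Iic
  have key : ∀ᵐ s ∂(volume.restrict (Set.Iic τ)), ‖f s‖ ≤ C * Real.exp (μ * s) := by
    filter_upwards [ae_restrict_mem measurableSet_Iic] with s hs
    rw [Real.norm_eq_abs, abs_of_nonneg (h0 s (le_trans hs hτ))]
    exact hb s (le_trans hs hτ)
  have hint : IntegrableOn f (Set.Iic τ) := Integrable.mono' hg hmeas key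
  refine ⟨hint, ?_⟩
  have : (∫ s in Set.Iic τ, f s) ≤ ∫ s in Set.Iic τ, C * Real.exp (μ * s) := by
    refine setIntegral_mono_on hint hg measurableSet_Iic fun s hs => hb s (le_trans hs hτ)
  rw [integral_const_mul, expmul_integral μ τ hμ] at this
  rw [mul_div_assoc]
  exact this

/-- Iteration scheme underlying uniqueness of ancient one-sided flows: if nonnegative
continuous `a, b` satisfy `a ≤ e^{-2λτ}`, `b(τ) ≤ C₆ ∫_{-∞}^τ a`, and
`e^{2λτ} a(τ) ≤ C₂ ∫_{-∞}^τ e^{λ s} b(s) ds` with `λ < 0`, then `a ≡ 0` and `b ≡ 0`. -/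
theorem stmt3 (lam τ₀ C₂ C₆ : ℝ) (hlam : lam < 0) (hτ₀ : τ₀ ≤ 0)
    (hC₂ : 0 < C₂) (hC₆ : 0 < C₆)
    (a b : ℝ → ℝ)
    (ha0 : ∀ τ ≤ τ₀, 0 ≤ a τ) (hb0 : ∀ τ ≤ τ₀, 0 ≤ b τ)
    (hacont : ContinuousOn a (Set.Iic τ₀)) (hbcont : ContinuousOn b (Set.Iic τ₀))
    (h1 : ∀ τ ≤ τ₀, a τ ≤ Real.exp (-2 * lam * τ))
    (h2 : ∀ τ ≤ τ₀, b τ ≤ C₆ * ∫ s in Set.Iic τ, a s)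
    (h3 : ∀ τ ≤ τ₀, Real.exp (2 * lam * τ) * a τ ≤
      C₂ * ∫ s in Set.Iic τ, Real.exp (lam * s) * b s) :
    ∀ τ ≤ τ₀, a τ = 0 ∧ b τ = 0 := by
  have hlam2 : (0:ℝ) < lam ^ 2 := by nlinarith
  set K : ℝ := C₂ * C₆ / lam ^ 2 with hK
  have hK0 : 0 < K := by positivity
  -- main iteration
  have claim : ∀ k : ℕ, ∀ τ ≤ τ₀,
      a τ ≤ (K ^ k / k.factorial) * Real.exp (-(2 + k) * lam * τ) := by
    intro k
    induction k with
    | zero =>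
      intro τ hτ
      simpa using h1 τ hτ
    | succ k ih =>
      set μ : ℝ := -(2 + (k:ℝ)) * lam with hμdef
      have hμ : 0 < μ := by
        have hkk : (0:ℝ) ≤ (k:ℝ) := Nat.cast_nonneg k
        nlinarith
      set M : ℝ := K ^ k / k.factorial with hM
      have hM0 : 0 ≤ M := by positivity
      -- bound on ∫ a
      have hIa : ∀ τ ≤ τ₀, (∫ s in Set.Iic τ, a s) ≤ M * Real.exp (μ * τ) / μ := by
        intro τ hτ
        exact (bound_int hμ hM0 hacont ha0 (by intro s hs; simpa [mul_comm] using ih s hs) hτ).2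
      -- bound on b
      have hbbd : ∀ τ ≤ τ₀, b τ ≤ (C₆ * M / μ) * Real.exp (μ * τ) := by
        intro τ hτ
        calc b τ ≤ C₆ * ∫ s in Set.Iic τ, a s := h2 τ hτ
          _ ≤ C₆ * (M * Real.exp (μ * τ) / μ) :=
            mul_le_mul_of_nonneg_left (hIa τ hτ) hC₆.le
          _ = (C₆ * M / μ) * Real.exp (μ * τ) := by ring
      -- bound on ∫ e^{λ s} b s
      set μ' : ℝ := lam + μ with hμ'def
      have hμ' : 0 < μ' := by
        have heq : μ' = -(1 + (k:ℝ)) * lam := by rw [hμ'def, hμdef]; ring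
        have hkk : (0:ℝ) ≤ (k:ℝ) := Nat.cast_nonneg k
        rw [heq]
        nlinarith
      have hC' : 0 ≤ C₆ * M / μ := by positivity
      have hfb : ∀ s ≤ τ₀, Real.exp (lam * s) * b s ≤
          (C₆ * M / μ) * Real.exp (μ' * s) := by
        intro s hs
        have := mul_le_mul_of_nonneg_left (hbbd s hs) (Real.exp_pos (lam * s)).le
        calc Real.exp (lam * s) * b s
            ≤ Real.exp (lam * s) * ((C₆ * M / μ) * Real.exp (μ * s)) := this
          _ = (C₆ * M / μ) * Real.exp (μ' * s) := by
              rw [hμ'def, add_mul, Real.exp_add]; ring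
      have hfbcont : ContinuousOn (fun s => Real.exp (lam * s) * b s) (Set.Iic τ₀) :=
        ((Real.continuous_exp.comp (continuous_const.mul continuous_id)).continuousOn).mul hbcont
      have hfb0 : ∀ s ≤ τ₀, 0 ≤ Real.exp (lam * s) * b s := fun s hs =>
        mul_nonneg (Real.exp_pos _).le (hb0 s hs)
      intro τ hτ
      have hIb := (bound_int hμ' hC' hfbcont hfb0 hfb hτ).2
      have h3' := h3 τ hτ
      have step : Real.exp (2 * lam * τ) * a τ ≤
          C₂ * ((C₆ * M / μ) * Real.exp (μ' * τ) / μ') :=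
        h3'.trans (mul_le_mul_of_nonneg_left hIb hC₂.le)
      -- turn into bound on a τ
      have hexp : 0 < Real.exp (2 * lam * τ) := Real.exp_pos _
      have haτ : a τ ≤ C₂ * C₆ * M / (μ * μ') * Real.exp (-(2 + (k+1:ℕ)) * lam * τ) := by
        have hdiv : a τ ≤ C₂ * ((C₆ * M / μ) * Real.exp (μ' * τ) / μ') / Real.exp (2 * lam * τ) :=
          (le_div_iff₀ hexp).mpr
            (by linarith [step, mul_comm (a τ) (Real.exp (2 * lam * τ))])
        have hexpeq : Real.exp (μ' * τ) / Real.exp (2 * lam * τ) =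
            Real.exp (-(2 + (k+1:ℕ)) * lam * τ) := by
          rw [← Real.exp_sub]
          congr 1
          rw [hμ'def, hμdef]
          push_cast
          ring
        calc a τ ≤ C₂ * ((C₆ * M / μ) * Real.exp (μ' * τ) / μ') / Real.exp (2 * lam * τ) := hdiv
          _ = C₂ * C₆ * M / (μ * μ') *
              (Real.exp (μ' * τ) / Real.exp (2 * lam * τ)) := by
            field_simp
          _ = C₂ * C₆ * M / (μ * μ') * Real.exp (-(2 + (k+1:ℕ)) * lam * τ) := by rw [hexpeq]
      refine haτ.trans (mul_le_mul_of_nonneg_right ?_ (Real.exp_pos _).le)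
      -- coefficient comparison
      have hμμ' : (k:ℝ) + 1 ≤ μ * μ' / lam ^ 2 := by
        have hμeq : μ * μ' = ((2 + (k:ℝ)) * (1 + (k:ℝ))) * lam ^ 2 := by
          rw [hμdef, hμ'def, hμdef]; ring
        rw [hμeq]
        rw [mul_div_assoc, div_self hlam2.ne', mul_one]
        nlinarith [sq_nonneg ((k:ℝ))]
      have hfac : (Nat.factorial (k+1) : ℝ) = ((k:ℝ)+1) * (Nat.factorial k : ℝ) := by
        rw [Nat.factorial_succ]; push_cast; ring
      have hμμ'pos : 0 < μ * μ' := mul_pos hμ hμ'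
      have e1 : K ^ (k+1) / ((k+1).factorial : ℝ) = M * (K / ((k:ℝ) + 1)) := by
        rw [hM, hfac, pow_succ]
        have hfk : (0:ℝ) < (Nat.factorial k : ℝ) := by positivity
        field_simp
      have e2 : C₂ * C₆ * M / (μ * μ') = M * (C₂ * C₆ / (μ * μ')) := by ring
      rw [e1, e2]
      refine mul_le_mul_of_nonneg_left ?_ hM0
      rw [div_le_div_iff₀ hμμ'pos (by positivity)]
      have e3 : K * (μ * μ') = C₂ * C₆ * (μ * μ' / lam ^ 2) := by
        rw [hK]; field_simp
      rw [e3]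
      exact mul_le_mul_of_nonneg_left hμμ' (by positivity)
  -- conclude a = 0
  have haz : ∀ τ ≤ τ₀, a τ = 0 := by
    intro τ hτ
    have hbd : ∀ k : ℕ, a τ ≤ K ^ k / k.factorial := by
      intro k
      refine (claim k τ hτ).trans ?_
      have hexple : Real.exp (-(2 + (k:ℕ)) * lam * τ) ≤ 1 := by
        rw [Real.exp_le_one_iff]
        have hτ0 : τ ≤ 0 := hτ.trans hτ₀
        have hkk : (0:ℝ) ≤ (k:ℝ) := Nat.cast_nonneg k
        have hx : 0 ≤ (2 + (k:ℝ)) * (-lam) * (-τ) :=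
          mul_nonneg (mul_nonneg (by linarith) (by linarith)) (by linarith)
        push_cast
        nlinarith [hx]
      calc (K ^ k / k.factorial) * Real.exp (-(2 + (k:ℕ)) * lam * τ)
          ≤ (K ^ k / k.factorial) * 1 :=
            mul_le_mul_of_nonneg_left hexple (by positivity)
        _ = K ^ k / k.factorial := mul_one _
    have hlim : Filter.Tendsto (fun k : ℕ => K ^ k / (k.factorial : ℝ)) Filter.atTop (nhds 0) :=
      FloorSemiring.tendsto_pow_div_factorial_atTop K
    have : a τ ≤ 0 := ge_of_tendsto' hlim hbd
    linarith [ha0 τ hτ]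
  intro τ hτ
  have haτ : a τ = 0 := haz τ hτ
  have hint0 : (∫ s in Set.Iic τ, a s) = 0 := by
    rw [setIntegral_congr_fun measurableSet_Iic
      (fun s hs => haz s (le_trans hs hτ))]
    simp
  have hb1 : b τ ≤ 0 := by
    have := h2 τ hτ
    rw [hint0, mul_zero] at this
    exact this
  exact ⟨haτ, le_antisymm hb1 (hb0 τ hτ)⟩
end

section
/- Let λ < 0 and 0 < δ < -λ, and let h : (-∞, 0] → ℝ be a measurable function with M² := ∫_{-∞}^0 e^{-2δσ} h(σ)² dσ < ∞. Define u(τ) := -∫_τ^0 e^{λ(σ - τ)} h(σ) dσ. Then: (a) u is locally absolutely continuous, u(0) = 0, and u'(τ) = -λ u(τ) + h(τ) for almost every τ ≤ 0; (b) |u(τ)| ≤ (2(-λ - δ))^{-1/2} e^{δτ} M for all τ ≤ 0. -/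
/-!
For `τ ≤ 0`, `u τ = e^{-λτ} ∫_0^τ g` where `g σ = e^{λσ} h σ` for `σ ≤ 0` (and `0` for `σ > 0`).
Since `e^{-δσ} h σ` is square integrable on `(-∞, 0]`, `g` is locally integrable, so Lebesgue's
differentiation theorem gives `u' = -λ u + h` almost everywhere, and `u`, a product of a smooth
function and an indefinite integral, is absolutely continuous, so it is the integral of this
derivative. For the decay, write `e^{λ(σ-τ)} h σ = e^{λ(σ-τ)+δσ} · e^{-δσ} h σ` and apply
Cauchy–Schwarz: `∫_τ^0 e^{2λ(σ-τ)+2δσ} dσ ≤ ∫_τ^∞ … = e^{2δτ} / (2(-λ-δ))` because `λ + δ < 0`.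
-/

open MeasureTheory Set Filter Real Topology

theorem abs_integral_mul_le_sqrt_mul_sqrt {α : Type*} [MeasurableSpace α] {μ : Measure α}
    {f g : α → ℝ} (hf : MemLp f 2 μ) (hg : MemLp g 2 μ) :
    |∫ x, f x * g x ∂μ| ≤ √(∫ x, f x ^ 2 ∂μ) * √(∫ x, g x ^ 2 ∂μ) := by
  have h2 : ENNReal.ofReal 2 = 2 := by norm_num
  have holder := integral_mul_norm_le_Lp_mul_Lq Real.HolderConjugate.two_two (h2 ▸ hf) (h2 ▸ hg)
  simp only [Real.norm_eq_abs, rpow_two, sq_abs] at holder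
  calc |∫ x, f x * g x ∂μ| ≤ ∫ x, |f x * g x| ∂μ := abs_integral_le_integral_abs
    _ ≤ _ := by simpa only [abs_mul, sqrt_eq_rpow] using holder

theorem MeasureTheory.LocallyIntegrable.absolutelyContinuousOnInterval_integral {g : ℝ → ℝ}
    (hg : LocallyIntegrable g volume) (c a b : ℝ) :
    AbsolutelyContinuousOnInterval (fun t => ∫ s in c..t, g s) a b := by
  set R := |a| + |b| + |c|
  have hmem : ∀ x, |x| ≤ R → x ∈ uIcc (-R) R := fun x hx => by
    rw [uIcc_of_le (by linarith [abs_le.mp hx])]; exact abs_le.mp hx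
  have := abs_nonneg a; have := abs_nonneg b; have := abs_nonneg c
  have hAC := ((hg.integrableOn_isCompact isCompact_uIcc).intervalIntegrable (a := -R) (b := R)
    ).absolutelyContinuousOnInterval_intervalIntegral (hmem c (by linarith))
  exact hAC.mono (uIcc_subset_uIcc (hmem a (by linarith)) (hmem b (by linarith)))

noncomputable def duhamel (lam : ℝ) (g : ℝ → ℝ) (t : ℝ) : ℝ :=
  exp (-lam * t) * ∫ s in (0 : ℝ)..t, g s

section Duhamel

variable {lam : ℝ} {g : ℝ → ℝ}

theorem duhamel_eq_neg_setIntegral {τ : ℝ} (hτ : τ ≤ 0) :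
    duhamel lam g τ = -∫ σ in Ioc τ 0, exp (lam * (σ - τ)) * (exp (-lam * σ) * g σ) := by
  have hexp : ∀ σ, exp (lam * (σ - τ)) * (exp (-lam * σ) * g σ) = exp (-lam * τ) * g σ := by
    intro σ
    rw [← mul_assoc, ← exp_add]
    ring_nf
  rw [duhamel, intervalIntegral.integral_symm τ 0, intervalIntegral.integral_of_le hτ]
  simp only [hexp, integral_const_mul]
  ring

theorem ae_hasDerivAt_duhamel (hg : LocallyIntegrable g volume) :
    ∀ᵐ t, HasDerivAt (duhamel lam g) (-lam * duhamel lam g t + exp (-lam * t) * g t) t := by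
  filter_upwards [LocallyIntegrable.ae_hasDerivAt_integral hg] with t ht
  have hexp : HasDerivAt (fun t => exp (-lam * t)) (exp (-lam * t) * -lam) t := by
    simpa using ((hasDerivAt_id t).const_mul (-lam)).exp
  refine (hexp.mul (ht 0)).congr_deriv ?_
  rw [duhamel]
  ring

theorem duhamel_sub_duhamel (hg : LocallyIntegrable g volume) (a b : ℝ) :
    duhamel lam g b - duhamel lam g a
      = ∫ t in a..b, (-lam * duhamel lam g t + exp (-lam * t) * g t) := by
  have hAC : AbsolutelyContinuousOnInterval (duhamel lam g) a b :=
    ContDiffOn.absolutelyContinuousOnInterval (f := fun t => exp (-lam * t)) (by fun_prop)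
      |>.mul (hg.absolutelyContinuousOnInterval_integral 0 a b)
  rw [← hAC.integral_deriv_eq_sub]
  refine intervalIntegral.integral_congr_ae ?_
  filter_upwards [ae_hasDerivAt_duhamel (lam := lam) hg] with t ht _
  exact ht.deriv

end Duhamel

theorem setIntegral_Ioc_exp_sq_le {lam δ : ℝ} (hδlam : δ < -lam) (τ : ℝ) :
    ∫ σ in Ioc τ 0, exp (lam * (σ - τ) + δ * σ) ^ 2 ≤ exp (2 * δ * τ) / (2 * (-lam - δ)) := by
  have hc : 2 * lam + 2 * δ < 0 := by linarith
  have hsq : ∀ σ, exp (lam * (σ - τ) + δ * σ) ^ 2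
      = exp (-2 * lam * τ) * exp ((2 * lam + 2 * δ) * σ) := by
    intro σ
    rw [← exp_nat_mul, ← exp_add]
    ring_nf
  simp only [hsq]
  calc ∫ σ in Ioc τ 0, exp (-2 * lam * τ) * exp ((2 * lam + 2 * δ) * σ)
      ≤ ∫ σ in Ioi τ, exp (-2 * lam * τ) * exp ((2 * lam + 2 * δ) * σ) :=
        setIntegral_mono_set ((integrableOn_exp_mul_Ioi hc τ).const_mul _)
          (.of_forall fun _ => by positivity) Ioc_subset_Ioi_self.eventuallyLE
    _ = exp (2 * δ * τ) / (2 * (-lam - δ)) := by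
        have hexp : exp (2 * δ * τ) = exp (-2 * lam * τ) * exp ((2 * lam + 2 * δ) * τ) := by
          rw [← exp_add]; ring_nf
        have hne : lam + δ ≠ 0 := by linarith
        have hne' : -lam - δ ≠ 0 := by linarith
        rw [integral_const_mul, integral_exp_mul_Ioi hc, hexp]
        field_simp
        ring

theorem sq_exp_neg_mul_mul (δ σ y : ℝ) : (exp (-δ * σ) * y) ^ 2 = exp (-2 * δ * σ) * y ^ 2 := by
  rw [mul_pow, ← exp_nat_mul]
  ring_nf

theorem abs_setIntegral_Ioc_exp_mul_le {lam δ τ : ℝ} {h : ℝ → ℝ} (hδlam : δ < -lam)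
    (hφ : MemLp (fun σ => exp (-δ * σ) * h σ) 2 (volume.restrict (Iic 0))) :
    |∫ σ in Ioc τ 0, exp (lam * (σ - τ)) * h σ|
      ≤ (2 * (-lam - δ)) ^ (-(1:ℝ)/2) * exp (δ * τ)
        * √(∫ σ in Iic 0, exp (-2 * δ * σ) * h σ ^ 2) := by
  have hfactor : ∀ σ, exp (lam * (σ - τ)) * h σ
      = exp (lam * (σ - τ) + δ * σ) * (exp (-δ * σ) * h σ) := by
    intro σ
    rw [← mul_assoc, ← exp_add]
    ring_nf
  have hw : MemLp (fun σ => exp (lam * (σ - τ) + δ * σ)) 2 (volume.restrict (Ioc τ 0)) :=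
    (memLp_two_iff_integrable_sq (by fun_prop)).2 (Continuous.integrableOn_Ioc (by fun_prop))
  have hIoc : Ioc τ 0 ⊆ Iic 0 := fun _ hσ => hσ.2
  have hd : 0 < 2 * (-lam - δ) := by linarith
  have hweight : √(exp (2 * δ * τ) / (2 * (-lam - δ)))
      = (2 * (-lam - δ)) ^ (-(1:ℝ)/2) * exp (δ * τ) := by
    rw [sqrt_div' _ hd.le, ← exp_half, neg_div, rpow_neg hd.le, ← sqrt_eq_rpow]
    ring_nf
  simp only [hfactor, ← hweight, ← sq_exp_neg_mul_mul]
  refine (abs_integral_mul_le_sqrt_mul_sqrt hw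
    (hφ.mono_measure (Measure.restrict_mono hIoc le_rfl))).trans ?_
  gcongr
  · exact setIntegral_Ioc_exp_sq_le hδlam τ
  · exact .of_forall fun _ => sq_nonneg _
  · exact hφ.integrable_sq

theorem stmt5_general (lam δ : ℝ) (hδlam : δ < -lam)
    (h : ℝ → ℝ) (hmeas : Measurable h) (M : ℝ) (hM : 0 ≤ M)
    (hfin : IntegrableOn (fun σ => Real.exp (-2 * δ * σ) * (h σ) ^ 2) (Set.Iic 0))
    (hM2 : (∫ σ in Set.Iic (0:ℝ), Real.exp (-2 * δ * σ) * (h σ) ^ 2) = M ^ 2)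
    (u : ℝ → ℝ)
    (hu : ∀ τ : ℝ, u τ = -∫ σ in Set.Ioc τ 0, Real.exp (lam * (σ - τ)) * h σ) :
    u 0 = 0 ∧
    (∀ τ₁ τ₂ : ℝ, τ₁ ≤ τ₂ → τ₂ ≤ 0 →
      u τ₂ - u τ₁ = ∫ s in Set.Ioc τ₁ τ₂, (-lam * u s + h s)) ∧
    (∀ᵐ τ : ℝ, τ ≤ (0:ℝ) → HasDerivAt u (-lam * u τ + h τ) τ) ∧
    (∀ τ ≤ (0:ℝ), |u τ| ≤ (2 * (-lam - δ)) ^ (-(1:ℝ)/2) * Real.exp (δ * τ) * M) := by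
  set φ := fun σ => exp (-δ * σ) * h σ
  have hφ : MemLp φ 2 (volume.restrict (Iic 0)) :=
    (memLp_two_iff_integrable_sq (by fun_prop)).2 (by simpa only [φ, sq_exp_neg_mul_mul])
  -- `g s = e^{λs} h s` for `s ≤ 0` and `0` beyond; factoring it through `φ ∈ L²` makes it
  -- locally integrable on all of `ℝ`.
  set g := fun s => exp ((lam + δ) * s) * (Iic 0).indicator φ s
  have hg : LocallyIntegrable g volume := .continuous_mul (by fun_prop)
    (((memLp_indicator_iff_restrict measurableSet_Iic).2 hφ).locallyIntegrable one_le_two)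
  have hforce : ∀ t ≤ 0, exp (-lam * t) * g t = h t := fun t ht => by
    simp only [g, φ, indicator_of_mem (mem_Iic.2 ht), ← mul_assoc, ← exp_add]
    rw [show -lam * t + ((lam + δ) * t + -δ * t) = 0 by ring, exp_zero, one_mul]
  have hrepr : ∀ τ ≤ 0, u τ = duhamel lam g τ := fun τ hτ => by
    rw [hu, duhamel_eq_neg_setIntegral hτ]
    congr 1
    exact setIntegral_congr_fun measurableSet_Ioc fun σ hσ => by rw [hforce σ hσ.2]
  refine ⟨by simp [hu], fun τ₁ τ₂ h12 h20 => ?_, ?_, fun τ hτ => ?_⟩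
  · rw [hrepr _ h20, hrepr _ (h12.trans h20), duhamel_sub_duhamel hg,
      intervalIntegral.integral_of_le h12]
    refine setIntegral_congr_fun measurableSet_Ioc fun s hs => ?_
    rw [hrepr s (hs.2.trans h20), hforce s (hs.2.trans h20)]
  · filter_upwards [ae_hasDerivAt_duhamel (lam := lam) hg, volume.ae_ne 0] with τ hderiv hne hle
    have hev : u =ᶠ[𝓝 τ] duhamel lam g :=
      eventually_of_mem (Iio_mem_nhds (hle.lt_of_ne hne)) fun t ht => hrepr t ht.le
    rw [hrepr τ hle, ← hforce τ hle]
    exact hderiv.congr_of_eventuallyEq hev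
  · simpa only [hu, abs_neg, hM2, sqrt_sq hM] using abs_setIntegral_Ioc_exp_mul_le hδlam hφ

/-- Backward Duhamel formula along a negative eigenvalue `λ < 0` with `0 < δ < -λ`:
`u(τ) = -∫_τ^0 e^{λ(σ-τ)} h(σ) dσ` vanishes at `τ = 0`, is absolutely continuous
with `u' = -λ u + h` a.e. (equivalently in integrated form), and decays like `e^{δτ}`. -/
theorem stmt5 (lam δ : ℝ) (hlam : lam < 0) (hδ : 0 < δ) (hδlam : δ < -lam)
    (h : ℝ → ℝ) (hmeas : Measurable h) (M : ℝ) (hM : 0 ≤ M)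
    (hfin : IntegrableOn (fun σ => Real.exp (-2 * δ * σ) * (h σ) ^ 2) (Set.Iic 0))
    (hM2 : (∫ σ in Set.Iic (0:ℝ), Real.exp (-2 * δ * σ) * (h σ) ^ 2) = M ^ 2)
    (u : ℝ → ℝ)
    (hu : ∀ τ : ℝ, u τ = -∫ σ in Set.Ioc τ 0, Real.exp (lam * (σ - τ)) * h σ) :
    u 0 = 0 ∧
    (∀ τ₁ τ₂ : ℝ, τ₁ ≤ τ₂ → τ₂ ≤ 0 →
      u τ₂ - u τ₁ = ∫ s in Set.Ioc τ₁ τ₂, (-lam * u s + h s)) ∧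
    (∀ᵐ τ : ℝ, τ ≤ (0:ℝ) → HasDerivAt u (-lam * u τ + h τ) τ) ∧
    (∀ τ ≤ (0:ℝ), |u τ| ≤ (2 * (-lam - δ)) ^ (-(1:ℝ)/2) * Real.exp (δ * τ) * M) :=
  stmt5_general lam δ hδlam h hmeas M hM hfin hM2 u hu
end

section
/- Let n ≥ 2, k ≥ 1 and let S ⊂ ℝ^{n+k} × ℝ be a compact set whose n-dimensional parabolic Hausdorff measure vanishes; that is, for every δ > 0 there is a finite cover of S by parabolic balls P_{r_i}(x_i, t_i) = B_{r_i}(x_i) × (t_i - r_i², t_i + r_i²) with all r_i < δ and Σ_i r_i^n < δ. Then for (Lebesgue) almost every t ∈ ℝ, the time slice S(t) = {x ∈ ℝ^{n+k} : (x,t) ∈ S} has vanishing (n-2)-dimensional Hausdorff measure: ℋ^{n-2}(S(t)) = 0. -/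
open MeasureTheory Filter Set Metric Topology
open scoped ENNReal

/-!
Cover `S` by parabolic cylinders `B_{rᵢ}(xᵢ) × (tᵢ - rᵢ², tᵢ + rᵢ²)` with `Σ rᵢⁿ` small.
At time `t` the balls of the cylinders alive at `t` cover the slice `S(t)`, so
`ℋ^{n-2}(S(t))` is bounded by the liminf of `F(t) = Σ_{t ∈ Iᵢ} (2rᵢ)^{n-2}`. Integrating in `t`,
each cylinder contributes `(2rᵢ)^{n-2} · 2rᵢ² = 2^{n-1} rᵢⁿ`, so `∫ F → 0` and Fatou's lemma
forces `liminf F = 0` almost everywhere.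
-/

noncomputable def sliceWeight {ι : Type*} [Fintype ι] (d : ℝ) (tc r : ι → ℝ) (t : ℝ) : ℝ≥0∞ :=
  ∑ i, (Ioo (tc i - r i ^ 2) (tc i + r i ^ 2)).indicator (fun _ => ENNReal.ofReal (2 * r i) ^ d) t

section SliceWeight

variable {ι : Type*} [Fintype ι]

theorem measurable_sliceWeight (d : ℝ) (tc r : ι → ℝ) : Measurable (sliceWeight d tc r) :=
  Finset.measurable_sum _ fun _ _ => measurable_const.indicator measurableSet_Ioo

theorem lintegral_sliceWeight (j : ℕ) (tc r : ι → ℝ) (hr : ∀ i, 0 ≤ r i) :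
    ∫⁻ t, sliceWeight j tc r t = ENNReal.ofReal (2 ^ (j + 1) * ∑ i, r i ^ (j + 2)) := by
  have h2r : ∀ i, 0 ≤ 2 * r i := fun i => by linarith [hr i]
  have hterm : ∀ i, ENNReal.ofReal (2 * r i) ^ (j : ℝ) *
      volume (Ioo (tc i - r i ^ 2) (tc i + r i ^ 2)) =
      ENNReal.ofReal (2 ^ (j + 1) * r i ^ (j + 2)) := fun i => by
    rw [Real.volume_Ioo, ENNReal.rpow_natCast, ← ENNReal.ofReal_pow (h2r i),
      ← ENNReal.ofReal_mul (pow_nonneg (h2r i) _)]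
    congr 1
    ring
  rw [Finset.mul_sum,
    ENNReal.ofReal_sum_of_nonneg fun i _ => mul_nonneg (by positivity) (pow_nonneg (hr i) _)]
  simp only [sliceWeight]
  rw [lintegral_finsetSum _ fun i _ => measurable_const.indicator measurableSet_Ioo]
  refine Finset.sum_congr rfl fun i _ => ?_
  rw [lintegral_indicator measurableSet_Ioo, setLIntegral_const, hterm]

end SliceWeight

theorem ediam_ball_le_ofReal {X : Type*} [PseudoMetricSpace X] (x : X) (r : ℝ) :
    ediam (ball x r) ≤ ENNReal.ofReal (2 * r) := by
  rw [← eball_ofReal, ENNReal.ofReal_mul zero_le_two, ENNReal.ofReal_ofNat]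
  exact ediam_eball_le

theorem hausdorffMeasure_slice_le_liminf_sliceWeight {X : Type*} [MetricSpace X]
    [MeasurableSpace X] [BorelSpace X] {β : Type*} {l : Filter β} {ι : β → Type*}
    [∀ b, Fintype (ι b)] {d : ℝ} (hd : 0 ≤ d) {S : Set (X × ℝ)} {x : ∀ b, ι b → X}
    {tc r : ∀ b, ι b → ℝ} {ε : β → ℝ} (hε : Tendsto ε l (𝓝 0)) (hrε : ∀ b i, r b i ≤ ε b)
    (hcov : ∀ b, S ⊆ ⋃ i, ball (x b i) (r b i) ×ˢ Ioo (tc b i - r b i ^ 2) (tc b i + r b i ^ 2))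
    (t : ℝ) :
    μH[d] {p | (p, t) ∈ S} ≤ liminf (fun b => sliceWeight d (tc b) (r b) t) l := by
  classical
  let alive : ∀ b, ι b → Prop := fun b i => t ∈ Ioo (tc b i - r b i ^ 2) (tc b i + r b i ^ 2)
  have hslice_cover : ∀ b, {p | (p, t) ∈ S} ⊆ ⋃ i : {i // alive b i}, ball (x b i) (r b i) :=
    fun b p hp => by
      obtain ⟨i, hpi, hti⟩ := mem_iUnion.1 (hcov b hp)
      exact mem_iUnion.2 ⟨⟨i, hti⟩, hpi⟩
  have hdiam : ∀ b (i : {i // alive b i}),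
      ediam (ball (x b i) (r b i)) ≤ ENNReal.ofReal (2 * ε b) :=
    fun b i => (ediam_ball_le_ofReal _ _).trans (ENNReal.ofReal_le_ofReal (by linarith [hrε b i]))
  have hε' : Tendsto (fun b => ENNReal.ofReal (2 * ε b)) l (𝓝 0) := by
    simpa using ENNReal.tendsto_ofReal (hε.const_mul 2)
  refine (Measure.hausdorffMeasure_le_liminf_sum d _ _ hε' _ (.of_forall hdiam)
    (.of_forall hslice_cover)).trans (liminf_le_liminf (.of_forall fun b => ?_))
  calc ∑ i : {i // alive b i}, ediam (ball (x b i) (r b i)) ^ d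
      ≤ ∑ i : {i // alive b i}, ENNReal.ofReal (2 * r b i) ^ d :=
        Finset.sum_le_sum fun i _ => ENNReal.rpow_le_rpow (ediam_ball_le_ofReal _ _) hd
    _ = sliceWeight d (tc b) (r b) t := by
        rw [← Finset.sum_subtype (Finset.univ.filter (alive b)) (by simp)
          (f := fun i => ENNReal.ofReal (2 * r b i) ^ d), Finset.sum_filter, sliceWeight]
        simp only [indicator_apply]

theorem ae_liminf_eq_zero_of_tendsto_lintegral {α : Type*} [MeasurableSpace α] {μ : Measure α}
    {F : ℕ → α → ℝ≥0∞} (hF : ∀ m, Measurable (F m))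
    (h : Tendsto (fun m => ∫⁻ a, F m a ∂μ) atTop (𝓝 0)) :
    ∀ᵐ a ∂μ, liminf (fun m => F m a) atTop = 0 := by
  refine (lintegral_eq_zero_iff (Measurable.liminf hF)).1 (le_antisymm ?_ bot_le)
  exact (lintegral_liminf_le hF).trans h.liminf_eq.le

theorem stmt9_general (n k : ℕ) (hn : 2 ≤ n)
    (S : Set (EuclideanSpace ℝ (Fin (n + k)) × ℝ))
    (hsmall : ∀ δ : ℝ, 0 < δ → ∃ (N : ℕ) (x : Fin N → EuclideanSpace ℝ (Fin (n + k)))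
      (tc : Fin N → ℝ) (r : Fin N → ℝ),
      (∀ i, 0 < r i) ∧ (∀ i, r i < δ) ∧ (∑ i, r i ^ n < δ) ∧
      S ⊆ ⋃ i, Metric.ball (x i) (r i) ×ˢ
        Set.Ioo (tc i - (r i) ^ 2) (tc i + (r i) ^ 2)) :
    ∀ᵐ t : ℝ, μH[(n : ℝ) - 2]
      {p : EuclideanSpace ℝ (Fin (n + k)) | (p, t) ∈ S} = 0 := by
  obtain ⟨j, rfl⟩ : ∃ j, n = j + 2 := ⟨n - 2, by omega⟩
  have hdim : ((j + 2 : ℕ) : ℝ) - 2 = j := by push_cast; ring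
  rw [hdim]
  choose N x tc r hr0 hrδ hsum hcov using fun m : ℕ => hsmall (1 / (m + 1)) (by positivity)
  have hmass : Tendsto (fun m => 2 ^ (j + 1) * ∑ i, r m i ^ (j + 2)) atTop (𝓝 0) :=
    squeeze_zero (fun m => mul_nonneg (by positivity)
        (Finset.sum_nonneg fun i _ => pow_nonneg (hr0 m i).le _))
      (fun m => mul_le_mul_of_nonneg_left (hsum m).le (by positivity))
      (by simpa using tendsto_one_div_add_atTop_nhds_zero_nat.const_mul ((2 : ℝ) ^ (j + 1)))
  have hint : Tendsto (fun m => ∫⁻ t, sliceWeight j (tc m) (r m) t) atTop (𝓝 0) := by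
    simp_rw [lintegral_sliceWeight j _ _ fun i => (hr0 _ i).le]
    simpa using ENNReal.tendsto_ofReal hmass
  filter_upwards [ae_liminf_eq_zero_of_tendsto_lintegral
    (fun m => measurable_sliceWeight _ _ _) hint] with t ht
  exact le_antisymm ((hausdorffMeasure_slice_le_liminf_sliceWeight (Nat.cast_nonneg j)
    tendsto_one_div_add_atTop_nhds_zero_nat (fun m i => (hrδ m i).le) hcov t).trans ht.le) bot_le

/-- Lemma F.3: if a compact spacetime set `S ⊂ ℝ^{n+k} × ℝ` has vanishing
`n`-dimensional parabolic Hausdorff measure (witnessed by arbitrarily fine finite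
parabolic-ball covers with `Σ rᵢⁿ < δ`), then for a.e. time `t` the slice `S(t)`
has vanishing `(n-2)`-dimensional Hausdorff measure. -/
theorem stmt9 (n k : ℕ) (hn : 2 ≤ n) (hk : 1 ≤ k)
    (S : Set (EuclideanSpace ℝ (Fin (n + k)) × ℝ)) (hS : IsCompact S)
    (hsmall : ∀ δ : ℝ, 0 < δ → ∃ (N : ℕ) (x : Fin N → EuclideanSpace ℝ (Fin (n + k)))
      (tc : Fin N → ℝ) (r : Fin N → ℝ),
      (∀ i, 0 < r i) ∧ (∀ i, r i < δ) ∧ (∑ i, r i ^ n < δ) ∧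
      S ⊆ ⋃ i, Metric.ball (x i) (r i) ×ˢ
        Set.Ioo (tc i - (r i) ^ 2) (tc i + (r i) ^ 2)) :
    ∀ᵐ t : ℝ, μH[(n : ℝ) - 2]
      {p : EuclideanSpace ℝ (Fin (n + k)) | (p, t) ∈ S} = 0 :=
  stmt9_general n k hn S hsmall
end

section
/- Let λ < 0, A ≥ 0, and δ : (-∞, 0] → [0, ∞) a continuous function with δ(τ) ≤ A e^{-λτ} for all τ ≤ 0 (so δ(τ) → 0 as τ → -∞ and δ is integrable on (-∞, 0]). Let f : (-∞, 0] → ℝ be C¹ with |f'(τ) + λ f(τ)| ≤ δ(τ) |f(τ)| for all τ ≤ 0 and f not identically zero. Then f has no zeros, the limit α := lim_{τ → -∞} e^{λτ} f(τ) exists in ℝ \ {0}, and moreover |e^{λτ} f(τ) - α| ≤ C(A, λ) · |α| · e^{-λτ} for all τ ≤ 0. -/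
/-!
Put `g τ = e^{λτ} f τ`, so that `|g'| ≤ δ |g| ≤ A e^{-λτ} |g|`. If `g` vanished somewhere it would
vanish identically, by uniqueness for the linear ODE `y' = (g'/g) y` with bounded coefficient.
Otherwise `log |g|` has derivative bounded by `φ'`, where `φ = (A / -λ) e^{-λτ} → 0` at `-∞`;
hence `log |g|` is Cauchy at `-∞`, with limit `L` and `|log |g τ| - L| ≤ φ τ`, and
exponentiating gives `g → ±e^L` with `|g τ ∓ e^L| ≤ e^L (e^{φ τ} - 1) = O(e^{-λτ})`.
-/

open Real Set Filter Topology

theorem eqOn_zero_of_abs_deriv_le_mul_abs {f f' : ℝ → ℝ} {a K τ₀ : ℝ}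
    (hf : ∀ τ ≤ a, HasDerivAt f (f' τ) τ) (hK : ∀ τ ≤ a, |f' τ| ≤ K * |f τ|)
    (hτ₀ : τ₀ ≤ a) (hf₀ : f τ₀ = 0) : EqOn f 0 (Iic a) := by
  intro τ hτ
  -- `f' = 0` wherever `f = 0`, so the junk value `f' t / 0 = 0` still gives `f' = v t f`.
  set v : ℝ → ℝ → ℝ := fun t x => (f' t / f t) • x
  have hv : ∀ t ≤ a, LipschitzWith K.toNNReal (v t) := by
    intro t ht
    refine (lipschitzWith_smul (f' t / f t)).weaken ?_
    rw [← NNReal.coe_le_coe, coe_nnnorm, Real.norm_eq_abs, Real.coe_toNNReal', abs_div]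
    rcases eq_or_ne (f t) 0 with h | h
    · simp [h]
    · exact le_max_of_le_left ((div_le_iff₀ (abs_pos.2 h)).2 (hK t ht))
  have hfv : ∀ t ≤ a, HasDerivAt f (v t (f t)) t := by
    intro t ht
    convert hf t ht using 1
    rcases eq_or_ne (f t) 0 with h | h
    · simpa [v, h, eq_comm] using hK t ht
    · exact div_mul_cancel₀ _ h
  have h0v : ∀ t, HasDerivAt (fun _ => (0 : ℝ)) (v t 0) t := fun t => by
    simpa [v] using hasDerivAt_const t (0 : ℝ)
  have hfc : ContinuousOn f (Iic a) := fun t ht => (hf t ht).continuousAt.continuousWithinAt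
  rcases le_total τ₀ τ with h | h
  · exact ODE_solution_unique_of_mem_Icc_right (s := fun _ => univ)
      (fun t ht => (hv t (ht.2.le.trans hτ)).lipschitzOnWith)
      (hfc.mono fun t ht => ht.2.trans hτ)
      (fun t ht => (hfv t (ht.2.le.trans hτ)).hasDerivWithinAt) (fun _ _ => trivial)
      continuousOn_const (fun t _ => (h0v t).hasDerivWithinAt) (fun _ _ => trivial) hf₀
      ⟨h, le_rfl⟩
  · exact ODE_solution_unique_of_mem_Icc_left (s := fun _ => univ)
      (fun t ht => (hv t (ht.2.trans hτ₀)).lipschitzOnWith)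
      (hfc.mono fun t ht => ht.2.trans hτ₀)
      (fun t ht => (hfv t (ht.2.trans hτ₀)).hasDerivWithinAt) (fun _ _ => trivial)
      continuousOn_const (fun t _ => (h0v t).hasDerivWithinAt) (fun _ _ => trivial) hf₀
      ⟨le_rfl, h⟩

theorem abs_sub_le_sub_of_abs_deriv_le {ψ ψ' φ φ' : ℝ → ℝ} {a σ τ : ℝ}
    (hψ : ∀ t ≤ a, HasDerivAt ψ (ψ' t) t) (hφ : ∀ t ≤ a, HasDerivAt φ (φ' t) t)
    (h : ∀ t ≤ a, |ψ' t| ≤ φ' t) (hστ : σ ≤ τ) (hτ : τ ≤ a) :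
    |ψ τ - ψ σ| ≤ φ τ - φ σ := by
  have hIcc : ∀ t ∈ Icc σ τ, t ≤ a := fun t ht => ht.2.trans hτ
  have hIco : ∀ t ∈ Ico σ τ, t ≤ a := fun t ht => ht.2.le.trans hτ
  refine image_norm_le_of_norm_deriv_right_le_deriv_boundary' (f := fun t => ψ t - ψ σ)
    (B := fun t => φ t - φ σ) (f' := ψ') (B' := φ')
    (fun t ht => ((hψ t (hIcc t ht)).continuousAt.sub continuousAt_const).continuousWithinAt)
    (fun t ht => ((hψ t (hIco t ht)).sub_const _).hasDerivWithinAt) (by simp)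
    (fun t ht => ((hφ t (hIcc t ht)).continuousAt.sub continuousAt_const).continuousWithinAt)
    (fun t ht => ((hφ t (hIco t ht)).sub_const _).hasDerivWithinAt)
    (fun t ht => h t (hIco t ht)) ⟨hστ, le_rfl⟩

theorem exists_tendsto_atBot_of_abs_sub_le_sub {ψ φ : ℝ → ℝ} {a c : ℝ}
    (hφ : Tendsto φ atBot (𝓝 c))
    (hψ : ∀ σ τ, σ ≤ τ → τ ≤ a → |ψ τ - ψ σ| ≤ φ τ - φ σ) :
    ∃ L, Tendsto ψ atBot (𝓝 L) ∧ ∀ τ ≤ a, |ψ τ - L| ≤ φ τ - c := by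
  have hdist : ∀ σ ≤ a, ∀ τ ≤ a, dist (ψ σ) (ψ τ) ≤ dist (φ σ) (φ τ) := by
    intro σ hσ τ hτ
    rw [Real.dist_eq, Real.dist_eq]
    rcases le_total σ τ with h | h
    · rw [abs_sub_comm, abs_sub_comm (φ σ)]
      exact (hψ σ τ h hτ).trans (le_abs_self _)
    · exact (hψ τ σ h hσ).trans (le_abs_self _)
  have hcauchy : Cauchy (map ψ atBot) := by
    refine cauchy_map_iff.2 ⟨inferInstance, tendsto_uniformity_iff_dist_tendsto_zero.2 ?_⟩
    have hφc := tendsto_uniformity_iff_dist_tendsto_zero.1 (cauchy_map_iff.1 hφ.cauchy_map).2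
    refine squeeze_zero' (Eventually.of_forall fun _ => dist_nonneg) ?_ hφc
    filter_upwards [prod_mem_prod (Iic_mem_atBot a) (Iic_mem_atBot a)] with p hp
    exact hdist p.1 hp.1 p.2 hp.2
  obtain ⟨L, hL⟩ := cauchy_map_iff_exists_tendsto.1 hcauchy
  refine ⟨L, hL, fun τ hτ => ?_⟩
  refine le_of_tendsto_of_tendsto ((tendsto_const_nhds.sub hL).abs)
    (tendsto_const_nhds.sub hφ) ?_
  filter_upwards [Iic_mem_atBot τ] with σ hσ
  exact hψ σ τ hσ hτ

theorem Real.abs_exp_sub_one_le_exp_abs_sub_one (u : ℝ) : |exp u - 1| ≤ exp |u| - 1 := by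
  rcases le_total 0 u with hu | hu
  · rw [abs_of_nonneg hu, abs_of_nonneg (by linarith [add_one_le_exp u])]
  · have h : exp u * exp (-u) = 1 := by rw [← exp_add, add_neg_cancel, exp_zero]
    rw [abs_of_nonpos hu, abs_of_nonpos (by linarith [exp_le_one_iff.2 hu])]
    nlinarith [add_one_le_exp u, add_one_le_exp (-u), exp_pos u]

theorem Real.exp_sub_one_le_mul_exp (x : ℝ) : exp x - 1 ≤ x * exp x := by
  have h : exp x * exp (-x) = 1 := by rw [← exp_add, add_neg_cancel, exp_zero]
  nlinarith [add_one_le_exp (-x), exp_pos x]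

theorem Real.exp_mul_sub_one_le {M x : ℝ} (hM : 0 ≤ M) (hx₀ : 0 ≤ x) (hx₁ : x ≤ 1) :
    exp (M * x) - 1 ≤ M * exp M * x :=
  calc exp (M * x) - 1 ≤ M * x * exp (M * x) := exp_sub_one_le_mul_exp _
    _ ≤ M * x * exp M := by gcongr; exact mul_le_of_le_one_right hM hx₁
    _ = M * exp M * x := by ring

theorem ContinuousOn.exists_abs_eq_one_forall_eq_mul_abs {g : ℝ → ℝ} {s : Set ℝ}
    (hs : IsPreconnected s) (hg : ContinuousOn g s) (hg0 : ∀ x ∈ s, g x ≠ 0) :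
    ∃ c : ℝ, |c| = 1 ∧ ∀ x ∈ s, g x = c * |g x| := by
  rcases hs.eq_or_eq_neg_of_sq_eq hg hg.abs (fun x _ => by simp [sq_abs])
    (fun hx => abs_ne_zero.2 (hg0 _ hx)) with h | h
  · exact ⟨1, abs_one, fun x hx => by simpa using h hx⟩
  · exact ⟨-1, by simp, fun x hx => by simpa using h hx⟩

theorem exists_tendsto_atBot_of_abs_deriv_le_mul_abs {g g' φ φ' : ℝ → ℝ} {a : ℝ}
    (hg : ∀ τ ≤ a, HasDerivAt g (g' τ) τ) (hg0 : ∀ τ ≤ a, g τ ≠ 0)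
    (hφ : ∀ τ ≤ a, HasDerivAt φ (φ' τ) τ) (hφ0 : Tendsto φ atBot (𝓝 0))
    (hbound : ∀ τ ≤ a, |g' τ| ≤ φ' τ * |g τ|) :
    ∃ α ≠ 0, Tendsto g atBot (𝓝 α) ∧ ∀ τ ≤ a, |g τ - α| ≤ |α| * (exp (φ τ) - 1) := by
  -- `Real.log` is `log ∘ abs` off `0`, so this works whatever the sign of `g`.
  have hlog : ∀ τ ≤ a, HasDerivAt (fun t => log (g t)) (g' τ / g τ) τ :=
    fun τ hτ => (hg τ hτ).log (hg0 τ hτ)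
  have hlog_bound : ∀ τ ≤ a, |g' τ / g τ| ≤ φ' τ := fun τ hτ => by
    rw [abs_div, div_le_iff₀ (abs_pos.2 (hg0 τ hτ))]
    exact hbound τ hτ
  obtain ⟨L, hL, hL_bound⟩ := exists_tendsto_atBot_of_abs_sub_le_sub hφ0
    fun σ τ hστ hτ => abs_sub_le_sub_of_abs_deriv_le hlog hφ hlog_bound hστ hτ
  obtain ⟨c, hc, hgc⟩ := ContinuousOn.exists_abs_eq_one_forall_eq_mul_abs isPreconnected_Iic
    (fun τ hτ => (hg τ hτ).continuousAt.continuousWithinAt) hg0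
  have hg_exp : ∀ τ ≤ a, g τ = c * exp (log (g τ)) := fun τ hτ => by
    rw [← log_abs, exp_log (abs_pos.2 (hg0 τ hτ)), ← hgc τ hτ]
  refine ⟨c * exp L, mul_ne_zero (by rintro rfl; simp at hc) (exp_ne_zero L), ?_, ?_⟩
  · refine (tendsto_const_nhds.mul ((continuous_exp.tendsto L).comp hL)).congr' ?_
    filter_upwards [Iic_mem_atBot a] with τ hτ
    exact (hg_exp τ hτ).symm
  · intro τ hτ
    have hsplit : g τ - c * exp L = c * exp L * (exp (log (g τ) - L) - 1) := by
      nth_rw 1 [hg_exp τ hτ]; rw [exp_sub]; field_simp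
    rw [hsplit, abs_mul (c * exp L)]
    gcongr
    calc |exp (log (g τ) - L) - 1| ≤ exp |log (g τ) - L| - 1 :=
          abs_exp_sub_one_le_exp_abs_sub_one _
      _ ≤ exp (φ τ) - 1 := by gcongr; simpa using hL_bound τ hτ

theorem exists_tendsto_atBot_of_abs_deriv_le_exp_mul_abs {g g' : ℝ → ℝ} {a A r : ℝ}
    (hr : 0 < r) (hg : ∀ τ ≤ a, HasDerivAt g (g' τ) τ) (hg0 : ∀ τ ≤ a, g τ ≠ 0)
    (hbound : ∀ τ ≤ a, |g' τ| ≤ A * exp (r * τ) * |g τ|) :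
    ∃ α ≠ 0, Tendsto g atBot (𝓝 α) ∧
      ∀ τ ≤ a, |g τ - α| ≤ |α| * (exp (A / r * exp (r * τ)) - 1) := by
  have hφ : ∀ τ, HasDerivAt (fun t => A / r * exp (r * t)) (A * exp (r * τ)) τ := fun τ =>
    (((hasDerivAt_id' τ).const_mul r).exp.const_mul (A / r)).congr_deriv
      (by field_simp [hr.ne'])
  have hφ0 : Tendsto (fun t => A / r * exp (r * t)) atBot (𝓝 0) := by
    simpa using (tendsto_exp_atBot.comp (tendsto_id.const_mul_atBot hr)).const_mul (A / r)
  exact exists_tendsto_atBot_of_abs_deriv_le_mul_abs hg hg0 (fun τ _ => hφ τ) hφ0 hbound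

theorem stmt15_general (lam A : ℝ) (hlam : lam < 0) (hA : 0 ≤ A)
    (δ : ℝ → ℝ)
    (hδbd : ∀ τ ≤ (0:ℝ), δ τ ≤ A * Real.exp (-lam * τ))
    (f f' : ℝ → ℝ)
    (hd : ∀ τ ≤ (0:ℝ), HasDerivAt f (f' τ) τ)
    (hineq : ∀ τ ≤ (0:ℝ), |f' τ + lam * f τ| ≤ δ τ * |f τ|)
    (hne : ∃ τ ≤ (0:ℝ), f τ ≠ 0) :
    (∀ τ ≤ (0:ℝ), f τ ≠ 0) ∧
    ∃ α : ℝ, α ≠ 0 ∧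
      Filter.Tendsto (fun τ => Real.exp (lam * τ) * f τ) Filter.atBot (nhds α) ∧
      ∃ C : ℝ, 0 < C ∧ ∀ τ ≤ (0:ℝ),
        |Real.exp (lam * τ) * f τ - α| ≤ C * |α| * Real.exp (-lam * τ) := by
  set g : ℝ → ℝ := fun τ => exp (lam * τ) * f τ
  set M := A / -lam
  have hg : ∀ τ ≤ 0, HasDerivAt g (exp (lam * τ) * (f' τ + lam * f τ)) τ := fun τ hτ =>
    (((hasDerivAt_id' τ).const_mul lam).exp.mul (hd τ hτ)).congr_deriv (by ring)
  have hg_bound : ∀ τ ≤ 0,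
      |exp (lam * τ) * (f' τ + lam * f τ)| ≤ A * exp (-lam * τ) * |g τ| := fun τ hτ => by
    rw [abs_mul, abs_mul, abs_of_pos (exp_pos _), mul_left_comm]
    gcongr
    exact (hineq τ hτ).trans (by gcongr; exact hδbd τ hτ)
  have hexp_le_one : ∀ τ ≤ 0, exp (-lam * τ) ≤ 1 := fun τ hτ =>
    exp_le_one_iff.2 (mul_nonpos_of_nonneg_of_nonpos (by linarith) hτ)
  have hg0 : ∀ τ ≤ 0, g τ ≠ 0 := by
    intro τ hτ hgτ
    obtain ⟨τ₁, hτ₁, hfτ₁⟩ := hne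
    have hAg : ∀ t ≤ 0, |exp (lam * t) * (f' t + lam * f t)| ≤ A * |g t| := fun t ht =>
      (hg_bound t ht).trans (by gcongr; exact mul_le_of_le_one_right hA (hexp_le_one t ht))
    simpa [g, hfτ₁] using eqOn_zero_of_abs_deriv_le_mul_abs hg hAg hτ hgτ (mem_Iic.2 hτ₁)
  obtain ⟨α, hα, hlim, hrate⟩ :=
    exists_tendsto_atBot_of_abs_deriv_le_exp_mul_abs (neg_pos.2 hlam) hg hg0 hg_bound
  have hM : 0 ≤ M := div_nonneg hA (by linarith)
  refine ⟨fun τ hτ => right_ne_zero_of_mul (hg0 τ hτ), α, hα, hlim, M * exp M + 1,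
    by positivity, fun τ hτ => ?_⟩
  calc |g τ - α| ≤ |α| * (exp (M * exp (-lam * τ)) - 1) := hrate τ hτ
    _ ≤ |α| * (M * exp M * exp (-lam * τ)) := by
      gcongr
      exact exp_mul_sub_one_le hM (exp_pos _).le (hexp_le_one τ hτ)
    _ ≤ (M * exp M + 1) * |α| * exp (-lam * τ) := by
      nlinarith [abs_nonneg α, exp_pos (-lam * τ)]

/-- Quantitative convergence of the dominant eigenmode: if `f` is `C¹` on `(-∞,0]`,
not identically zero, and `|f' + λ f| ≤ δ(τ) |f|` with `λ < 0` and
`δ(τ) ≤ A e^{-λτ}`, then `f` never vanishes, `e^{λτ} f(τ)` converges as `τ → -∞`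
to a nonzero limit `α`, with rate `|e^{λτ} f(τ) - α| ≤ C(A,λ) |α| e^{-λτ}`. -/
theorem stmt15 (lam A : ℝ) (hlam : lam < 0) (hA : 0 ≤ A)
    (δ : ℝ → ℝ) (hδcont : ContinuousOn δ (Set.Iic 0))
    (hδ0 : ∀ τ ≤ (0:ℝ), 0 ≤ δ τ)
    (hδbd : ∀ τ ≤ (0:ℝ), δ τ ≤ A * Real.exp (-lam * τ))
    (f f' : ℝ → ℝ)
    (hd : ∀ τ ≤ (0:ℝ), HasDerivAt f (f' τ) τ)
    (hf'cont : ContinuousOn f' (Set.Iic 0))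
    (hineq : ∀ τ ≤ (0:ℝ), |f' τ + lam * f τ| ≤ δ τ * |f τ|)
    (hne : ∃ τ ≤ (0:ℝ), f τ ≠ 0) :
    (∀ τ ≤ (0:ℝ), f τ ≠ 0) ∧
    ∃ α : ℝ, α ≠ 0 ∧
      Filter.Tendsto (fun τ => Real.exp (lam * τ) * f τ) Filter.atBot (nhds α) ∧
      ∃ C : ℝ, 0 < C ∧ ∀ τ ≤ (0:ℝ),
        |Real.exp (lam * τ) * f τ - α| ≤ C * |α| * Real.exp (-lam * τ) :=
  stmt15_general lam A hlam hA δ hδbd f f' hd hineq hne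
end
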